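/- arXiv:2411.16574 — 6 statements merged into one kernel-verified Lean document; each statement's English description precedes it below -/
import Mathlib

section
/- Fix real numbers β and γ with 1 > β > γ > 0. Let A be a deterministic, path-invariant bandit algorithm, i.e., a function from histories (finite lists of (action, reward) pairs with actions in {H,L} and real rewards) to actions such that A(h) = A(h') whenever h and h' are path-equivalent. Suppose two players both run A in the repeated Prisoner's Dilemma: at each round t, player i plays a_i(t) = A(h_i(t)), where h_i(t) is the list of player i's own (action, reward) pairs from rounds 0,…,t−1, the round's rewards are the Prisoner's Dilemma payoffs of the joint action (a_0(t), a_1(t)), and each player appends its own (action, reward) pair to its history. If at some round t* the two players' histories h_0(t*) and h_1(t*) are path-equivalent, then for every round t ≥ t*: (1) a_0(t) = a_1(t), and (2) h_0(t) and h_1(t) are path-equivalent. -/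
/-- An action in the Prisoner's Dilemma. -/
inductive Act : Type
  | H | L
  deriving DecidableEq

/-- The Prisoner's Dilemma payoff to a player who plays the first action while
the opponent plays the second action. -/
def pay (β γ : ℝ) : Act → Act → ℝ
  | .H, .H => β
  | .H, .L => 0
  | .L, .H => 1
  | .L, .L => γ

/-- The number of entries of a history (a finite list of (action, reward)
pairs) whose action is `a`. -/
def cnt (a : Act) (h : List (Act × ℝ)) : ℕ :=
  (h.filter (fun p => p.1 = a)).length

/-- The sum of the rewards over the entries of a history whose action is `a`. -/
def tot (a : Act) (h : List (Act × ℝ)) : ℝ :=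
  ((h.filter (fun p => p.1 = a)).map Prod.snd).sum

/-- Two histories are path-equivalent if, for each action, the number of
entries with that action and the sum of rewards over those entries agree. -/
def PathEq (h h' : List (Act × ℝ)) : Prop :=
  ∀ a : Act, cnt a h = cnt a h' ∧ tot a h = tot a h'

theorem PathEq.append_right {h h' : List (Act × ℝ)} (hpe : PathEq h h')
    (k : List (Act × ℝ)) : PathEq (h ++ k) (h' ++ k) := by
  intro x
  obtain ⟨hcnt, htot⟩ := hpe x
  simp only [cnt, tot, List.filter_append, List.length_append, List.map_append,
    List.sum_append] at hcnt htot ⊢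
  exact ⟨by rw [hcnt], by rw [htot]⟩

theorem stmt4_general (β γ : ℝ)
    (A : List (Act × ℝ) → Act)
    (hA : ∀ h h' : List (Act × ℝ), PathEq h h' → A h = A h')
    (a : Fin 2 → ℕ → Act) (h : Fin 2 → ℕ → List (Act × ℝ))
    (ha : ∀ (i : Fin 2) (t : ℕ), a i t = A (h i t))
    (hrec : ∀ (i : Fin 2) (t : ℕ),
      h i (t + 1) = h i t ++ [(a i t, pay β γ (a i t) (a (1 - i) t))])
    (tstar : ℕ) (hstar : PathEq (h 0 tstar) (h 1 tstar)) :
    ∀ t : ℕ, tstar ≤ t → a 0 t = a 1 t ∧ PathEq (h 0 t) (h 1 t) := by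
  have hact : ∀ t, PathEq (h 0 t) (h 1 t) → a 0 t = a 1 t := fun t hpe => by
    rw [ha, ha]
    exact hA _ _ hpe
  have hpath : ∀ t, tstar ≤ t → PathEq (h 0 t) (h 1 t) := by
    intro t ht
    induction t, ht using Nat.le_induction with
    | base => exact hstar
    | succ t _ ih =>
      -- both players play the same action, so both append the entry `(a, pay β γ a a)`
      rw [hrec 0 t, hrec 1 t, show (1 - 0 : Fin 2) = 1 from rfl,
        show (1 - 1 : Fin 2) = 0 from rfl, hact t ih]
      exact ih.append_right _
  exact fun t ht => ⟨hact t (hpath t ht), hpath t ht⟩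

/-- Lemma 4 of the paper: if two players both run a deterministic,
path-invariant bandit algorithm `A` in the repeated Prisoner's Dilemma, and at
some round `t*` their histories are path-equivalent, then at every round
`t ≥ t*` they play the same action and their histories remain path-equivalent. -/
theorem stmt4 (β γ : ℝ) (hβ1 : β < 1) (hγβ : γ < β) (hγ0 : 0 < γ)
    (A : List (Act × ℝ) → Act)
    (hA : ∀ h h' : List (Act × ℝ), PathEq h h' → A h = A h')
    (a : Fin 2 → ℕ → Act) (h : Fin 2 → ℕ → List (Act × ℝ))
    (ha : ∀ (i : Fin 2) (t : ℕ), a i t = A (h i t))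
    (hrec : ∀ (i : Fin 2) (t : ℕ),
      h i (t + 1) = h i t ++ [(a i t, pay β γ (a i t) (a (1 - i) t))])
    (tstar : ℕ) (hstar : PathEq (h 0 tstar) (h 1 tstar)) :
    ∀ t : ℕ, tstar ≤ t → a 0 t = a 1 t ∧ PathEq (h 0 t) (h 1 t) :=
  stmt4_general β γ A hA a h ha hrec tstar hstar
end

section
/- Fix real numbers β and γ with 1 > β > γ > 0. Let A be a deterministic bandit algorithm (a function from histories to actions), and suppose two players both run A in the repeated Prisoner's Dilemma: at each round t, player i plays a_i(t) = A(h_i(t)), where h_i(t) is the list of player i's own (action, reward) pairs from rounds 0,…,t−1, rewards are the Prisoner's Dilemma payoffs of the joint action, and histories are extended accordingly. Assume the resulting play is non-degenerate in that there exists a round in which H is played and a round in which L is played. Then there exists a finite time T such that for all t ≥ T and both players i: player i's empirical mean reward for H over h_i(t) equals β, player i's empirical mean reward for L over h_i(t) equals γ, and hence the value estimate of H strictly exceeds the value estimate of L (i.e., the target policy of both players is H for all t ≥ T: the players learn to collude). -/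
/-- The value estimate of action `a` given a history: the empirical mean of
the rewards over entries with action `a` (0 if `a` never appears). -/
noncomputable def val (a : Act) (h : List (Act × ℝ)) : ℝ :=
  if cnt a h = 0 then 0 else tot a h / (cnt a h : ℝ)

/-!
Since both players run the same deterministic algorithm from the same empty history,
their histories coincide forever, so they always play the same action and every entry
of a history is either `(H, β)` or `(L, γ)`. Once both actions have been played, the
empirical means are therefore exactly `β` and `γ`, and `γ < β`.
-/

theorem val_eq_of_forall_fst_eq {x : Act} {r : ℝ} {l : List (Act × ℝ)}
    (hx : ∃ p ∈ l, p.1 = x) (hr : ∀ p ∈ l, p.1 = x → p.2 = r) : val x l = r := by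
  have hcnt : cnt x l ≠ 0 := by
    simpa [cnt, List.filter_eq_nil_iff] using hx
  have htot : tot x l = cnt x l * r := by
    rw [tot, cnt, List.sum_eq_card_nsmul _ r, List.length_map, nsmul_eq_mul]
    simp only [List.mem_map, List.mem_filter, decide_eq_true_eq]
    rintro _ ⟨p, ⟨hp, hpx⟩, rfl⟩
    exact hr p hp hpx
  rw [val, if_neg hcnt, htot]
  field_simp

structure SelfPlay (β γ : ℝ) (A : List (Act × ℝ) → Act) (a : Fin 2 → ℕ → Act)
    (h : Fin 2 → ℕ → List (Act × ℝ)) : Prop where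
  init : ∀ i : Fin 2, h i 0 = []
  act : ∀ (i : Fin 2) (t : ℕ), a i t = A (h i t)
  step : ∀ (i : Fin 2) (t : ℕ),
    h i (t + 1) = h i t ++ [(a i t, pay β γ (a i t) (a (1 - i) t))]

section

variable {β γ : ℝ} {A : List (Act × ℝ) → Act} {a : Fin 2 → ℕ → Act}
  {h : Fin 2 → ℕ → List (Act × ℝ)}

theorem mem_history_of_lt
    (hrec : ∀ (i : Fin 2) (t : ℕ),
      h i (t + 1) = h i t ++ [(a i t, pay β γ (a i t) (a (1 - i) t))])
    {i : Fin 2} {s t : ℕ} (hst : s < t) :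
    (a i s, pay β γ (a i s) (a (1 - i) s)) ∈ h i t := by
  induction t, hst using Nat.le_induction with
  | base => simp [hrec]
  | succ t _ ih => simp [hrec, ih]

namespace SelfPlay

theorem history_eq (hplay : SelfPlay β γ A a h)
    (i j : Fin 2) (t : ℕ) : h i t = h j t := by
  induction t generalizing i j with
  | zero => rw [hplay.init, hplay.init]
  | succ t ih =>
    have hact : ∀ i j, a i t = a j t := fun i j => by rw [hplay.act, hplay.act, ih]
    rw [hplay.step, hplay.step, ih i j, hact i j, hact (1 - i) (1 - j)]

theorem action_eq (hplay : SelfPlay β γ A a h)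
    (i j : Fin 2) (t : ℕ) : a i t = a j t := by
  rw [hplay.act, hplay.act, hplay.history_eq i j]

theorem snd_eq_pay_diag_of_mem (hplay : SelfPlay β γ A a h)
    {i : Fin 2} {t : ℕ} {p : Act × ℝ} (hp : p ∈ h i t) : p.2 = pay β γ p.1 p.1 := by
  induction t with
  | zero => simp [hplay.init] at hp
  | succ t ih =>
    rw [hplay.step, List.mem_append, List.mem_singleton] at hp
    rcases hp with hp | rfl
    · exact ih hp
    · rw [hplay.action_eq (1 - i) i]

theorem val_eq_pay_diag (hplay : SelfPlay β γ A a h)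
    (i j : Fin 2) {s t : ℕ} (hst : s < t) :
    val (a j s) (h i t) = pay β γ (a j s) (a j s) := by
  have hplayed := mem_history_of_lt hplay.step (i := i) hst
  rw [hplay.action_eq i j, hplay.action_eq (1 - i) j] at hplayed
  exact val_eq_of_forall_fst_eq ⟨_, hplayed, rfl⟩ fun p hp hpx =>
    hpx ▸ hplay.snd_eq_pay_diag_of_mem hp

end SelfPlay

end

theorem stmt5_general (β γ : ℝ) (hγβ : γ < β)
    (A : List (Act × ℝ) → Act)
    (a : Fin 2 → ℕ → Act) (h : Fin 2 → ℕ → List (Act × ℝ))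
    (hinit : ∀ i : Fin 2, h i 0 = [])
    (ha : ∀ (i : Fin 2) (t : ℕ), a i t = A (h i t))
    (hrec : ∀ (i : Fin 2) (t : ℕ),
      h i (t + 1) = h i t ++ [(a i t, pay β γ (a i t) (a (1 - i) t))])
    (hH : ∃ (t : ℕ) (i : Fin 2), a i t = Act.H)
    (hL : ∃ (t : ℕ) (i : Fin 2), a i t = Act.L) :
    ∃ T : ℕ, ∀ t : ℕ, T ≤ t → ∀ i : Fin 2,
      val Act.H (h i t) = β ∧ val Act.L (h i t) = γ ∧
      val Act.H (h i t) > val Act.L (h i t) := by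
  have hplay : SelfPlay β γ A a h := ⟨hinit, ha, hrec⟩
  obtain ⟨tH, iH, hiH⟩ := hH
  obtain ⟨tL, iL, hiL⟩ := hL
  refine ⟨max tH tL + 1, fun t ht i => ?_⟩
  have hvH : val Act.H (h i t) = β := by
    simpa [hiH, pay] using hplay.val_eq_pay_diag i iH (s := tH) (by omega)
  have hvL : val Act.L (h i t) = γ := by
    simpa [hiL, pay] using hplay.val_eq_pay_diag i iL (s := tL) (by omega)
  exact ⟨hvH, hvL, hvH ▸ hvL ▸ hγβ⟩

/-- Proposition 1 of the paper: two symmetric deterministic bandits playing the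
infinitely repeated Prisoner's Dilemma (starting from empty histories, with the
resulting play non-degenerate in that both H and L are played at some rounds)
learn to collude: eventually both players' value estimates of H equal `β`,
their value estimates of L equal `γ`, and hence the value estimate of H
strictly exceeds that of L, forever after. -/
theorem stmt5 (β γ : ℝ) (hβ1 : β < 1) (hγβ : γ < β) (hγ0 : 0 < γ)
    (A : List (Act × ℝ) → Act)
    (a : Fin 2 → ℕ → Act) (h : Fin 2 → ℕ → List (Act × ℝ))
    (hinit : ∀ i : Fin 2, h i 0 = [])
    (ha : ∀ (i : Fin 2) (t : ℕ), a i t = A (h i t))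
    (hrec : ∀ (i : Fin 2) (t : ℕ),
      h i (t + 1) = h i t ++ [(a i t, pay β γ (a i t) (a (1 - i) t))])
    (hH : ∃ (t : ℕ) (i : Fin 2), a i t = Act.H)
    (hL : ∃ (t : ℕ) (i : Fin 2), a i t = Act.L) :
    ∃ T : ℕ, ∀ t : ℕ, T ≤ t → ∀ i : Fin 2,
      val Act.H (h i t) = β ∧ val Act.L (h i t) = γ ∧
      val Act.H (h i t) > val Act.L (h i t) :=
  stmt5_general β γ hγβ A a h hinit ha hrec hH hL
end

section
/- Fix real numbers β and γ with 1 > β > γ > 0, and let δ be a real number with 0 < δ < e^{−γ²/2}. Then for every natural number n with n·β/(n+1) ≤ γ, it holds that n·β/(n+1) + √(2·ln(1/δ)/(n+1)) > γ. In particular (taking n = 0), √(2·ln(1/δ)) > γ. -/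
/-!
Since `δ < e^{-γ²/2}`, we have `γ² < 2 ln(1/δ)`. The index exceeds `γ` by at least
`√(2 ln(1/δ)/(n+1)) - γ/(n+1)` because `γ ≤ β`, and this is positive: after squaring it suffices that
`γ² < 2 ln(1/δ) · (n+1)`.
-/

open Real

lemma sq_lt_two_mul_log_one_div {γ δ : ℝ} (hδ0 : 0 < δ) (hδ : δ < exp (-γ ^ 2 / 2)) :
    γ ^ 2 < 2 * log (1 / δ) := by
  have hlog : log δ < -γ ^ 2 / 2 := (log_lt_iff_lt_exp hδ0).2 hδ
  rw [one_div, log_inv]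
  linarith

lemma div_lt_sqrt_div {γ b m : ℝ} (hm : 1 ≤ m) (h : γ ^ 2 < b) : γ / m < √(b / m) := by
  apply lt_sqrt_of_sq_lt
  rw [div_pow, div_lt_div_iff₀ (by positivity) (by positivity)]
  have hb : 0 < b := (sq_nonneg γ).trans_lt h
  calc γ ^ 2 * m < b * m := by gcongr
    _ ≤ b * m ^ 2 := by gcongr; nlinarith

lemma lt_mul_div_add_sqrt_div {β γ b n : ℝ} (hn : 0 ≤ n) (hγβ : γ ≤ β) (hγb : γ ^ 2 < b) :
    γ < n * β / (n + 1) + √(b / (n + 1)) := by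
  have hgap : γ ≤ n * β / (n + 1) + γ / (n + 1) := by
    rw [← add_div, le_div_iff₀ (by positivity)]
    nlinarith
  linarith [div_lt_sqrt_div (by linarith : 1 ≤ n + 1) hγb]

theorem stmt9_general (β γ δ : ℝ) (hγβ : γ < β)
    (hδ0 : 0 < δ) (hδ : δ < Real.exp (-γ ^ 2 / 2)) :
    (∀ n : ℕ, (n : ℝ) * β / ((n : ℝ) + 1) ≤ γ →
      (n : ℝ) * β / ((n : ℝ) + 1) +
        Real.sqrt (2 * Real.log (1 / δ) / ((n : ℝ) + 1)) > γ) ∧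
    Real.sqrt (2 * Real.log (1 / δ)) > γ := by
  have hL := sq_lt_two_mul_log_one_div hδ0 hδ
  exact ⟨fun n _ => lt_mul_div_add_sqrt_div n.cast_nonneg hγβ.le hL, lt_sqrt_of_sq_lt hL⟩

/-- If `0 < δ < e^{−γ²/2}`, then for every `n` with `n·β/(n+1) ≤ γ`, the UCB
index `n·β/(n+1) + √(2·ln(1/δ)/(n+1))` of action H (after `n` plays of H with
reward `β` and one play with reward 0) exceeds `γ`; in particular (taking
`n = 0`), `√(2·ln(1/δ)) > γ`. -/
theorem stmt9 (β γ δ : ℝ) (hβ1 : β < 1) (hγβ : γ < β) (hγ0 : 0 < γ)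
    (hδ0 : 0 < δ) (hδ : δ < Real.exp (-γ ^ 2 / 2)) :
    (∀ n : ℕ, (n : ℝ) * β / ((n : ℝ) + 1) ≤ γ →
      (n : ℝ) * β / ((n : ℝ) + 1) +
        Real.sqrt (2 * Real.log (1 / δ) / ((n : ℝ) + 1)) > γ) ∧
    Real.sqrt (2 * Real.log (1 / δ)) > γ :=
  stmt9_general β γ δ hγβ hδ0 hδ
end

section
/- Let (X_n)_{n∈ℕ} and (Y_n)_{n∈ℕ} be mutually independent sequences of random variables on a probability space, with the X_n i.i.d. Bernoulli(p) for some p ∈ [0,1) and the Y_n i.i.d. Bernoulli(q) for some q ∈ [0,1]. Fix real numbers γ ∈ (0,1), c ≥ 0, d ≥ 0. Then almost surely, as n → ∞, (c + Σ_{i<n} (1−X_i)·Y_i + γ·(d + Σ_{i<n} (1−X_i)·(1−Y_i)))/(c + d + Σ_{i<n} (1−X_i)) → q + γ·(1−q). (This is the almost-sure limit of player 0's value estimate of L when player 0 plays L in round i iff X_i = 0 and player 1 plays H in round i iff Y_i = 1, starting from c prior (L,H) outcomes and d prior (L,L) outcomes.) -/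
/-!
By the strong law of large numbers, applied to the i.i.d. Bernoulli sequences `1 - X i`
(player 0 plays L) and `(1 - X i) * Y i` (the outcome is (L,H)), whose means are `1 - p` and
`(1 - p) * q`, the counts of L-rounds and of (L,H)-rounds grow like `(1 - p) n` and
`(1 - p) q n`; the (L,L) count is their difference. The initial counts `c`, `d` are negligible,
so the estimate tends to `((1 - p) q + γ (1 - p) (1 - q)) / (1 - p) = q + γ (1 - q)`.
-/

open MeasureTheory ProbabilityTheory Filter Topology Finset

section ZeroOneValued

variable {Ω : Type*} [MeasurableSpace Ω] {μ : Measure Ω}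

lemma identDistrib_indicator_const {M : Type*} [Zero M] [MeasurableSpace M]
    [IsProbabilityMeasure μ] {A B : Set Ω} (hA : MeasurableSet A) (hB : MeasurableSet B)
    (h : μ A = μ B) (c : M) :
    IdentDistrib (A.indicator fun _ => c) (B.indicator fun _ => c) μ μ := by
  classical
  refine ⟨(measurable_const.indicator hA).aemeasurable,
    (measurable_const.indicator hB).aemeasurable, Measure.ext fun s hs => ?_⟩
  rw [Measure.map_apply (measurable_const.indicator hA) hs,
    Measure.map_apply (measurable_const.indicator hB) hs,
    Set.indicator_const_preimage_eq_union, Set.indicator_const_preimage_eq_union]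
  split_ifs <;> simp [prob_compl_eq_one_sub, hA, hB, h]

variable {Z W : Ω → ℝ}

omit [MeasurableSpace Ω] in
lemma eq_indicator_one_of_zero_or_one (h01 : ∀ ω, Z ω = 0 ∨ Z ω = 1) :
    Z = {ω | Z ω = 1}.indicator fun _ => 1 := by
  funext ω
  rcases h01 ω with h | h <;> simp [h]

lemma integrable_of_zero_or_one [IsFiniteMeasure μ] (hZ : Measurable Z)
    (h01 : ∀ ω, Z ω = 0 ∨ Z ω = 1) : Integrable Z μ := by
  rw [eq_indicator_one_of_zero_or_one h01]
  exact (integrable_const 1).indicator (hZ (measurableSet_singleton 1))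

lemma integral_of_zero_or_one (hZ : Measurable Z) (h01 : ∀ ω, Z ω = 0 ∨ Z ω = 1) :
    ∫ ω, Z ω ∂μ = μ.real {ω | Z ω = 1} := by
  conv_lhs => rw [eq_indicator_one_of_zero_or_one h01]
  exact integral_indicator_one (hZ (measurableSet_singleton 1))

lemma identDistrib_of_zero_or_one [IsProbabilityMeasure μ] (hZ : Measurable Z)
    (hW : Measurable W) (hZ01 : ∀ ω, Z ω = 0 ∨ Z ω = 1)
    (hW01 : ∀ ω, W ω = 0 ∨ W ω = 1) (h : μ {ω | Z ω = 1} = μ {ω | W ω = 1}) :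
    IdentDistrib Z W μ μ := by
  have hZ1 : MeasurableSet {ω | Z ω = 1} := hZ (measurableSet_singleton 1)
  have hW1 : MeasurableSet {ω | W ω = 1} := hW (measurableSet_singleton 1)
  have := identDistrib_indicator_const hZ1 hW1 h (1 : ℝ)
  rwa [← eq_indicator_one_of_zero_or_one hZ01, ← eq_indicator_one_of_zero_or_one hW01] at this

lemma prob_eq_zero_of_zero_or_one [IsProbabilityMeasure μ] (hZ : Measurable Z)
    (h01 : ∀ ω, Z ω = 0 ∨ Z ω = 1) : μ {ω | Z ω = 0} = 1 - μ {ω | Z ω = 1} := by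
  have hcompl : {ω | Z ω = 0} = {ω | Z ω = 1}ᶜ := by
    ext ω
    rcases h01 ω with h | h <;> simp [h]
  have hZ1 : MeasurableSet {ω | Z ω = 1} := hZ (measurableSet_singleton 1)
  rw [hcompl, prob_compl_eq_one_sub hZ1]

theorem strong_law_ae_of_zero_or_one [IsProbabilityMeasure μ] {Z : ℕ → Ω → ℝ}
    (hZ : ∀ i, Measurable (Z i)) (h01 : ∀ i ω, Z i ω = 0 ∨ Z i ω = 1)
    (hindep : Pairwise fun i j => IndepFun (Z i) (Z j) μ) {m : ENNReal}
    (hm : ∀ i, μ {ω | Z i ω = 1} = m) :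
    ∀ᵐ ω ∂μ, Tendsto (fun n : ℕ => (∑ i ∈ range n, Z i ω) / n) atTop (𝓝 m.toReal) := by
  have hident : ∀ i, IdentDistrib (Z i) (Z 0) μ μ := fun i =>
    identDistrib_of_zero_or_one (hZ i) (hZ 0) (h01 i) (h01 0) (by rw [hm, hm])
  have hmean : μ[Z 0] = m.toReal := by
    rw [integral_of_zero_or_one (hZ 0) (h01 0), measureReal_def, hm]
  simpa only [hmean] using
    strong_law_ae_real Z (integrable_of_zero_or_one (hZ 0) (h01 0)) hindep hident

lemma ProbabilityTheory.IndepFun.measure_mul_eq_one_of_zero_or_one (hZW : IndepFun Z W μ)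
    (hZ01 : ∀ ω, Z ω = 0 ∨ Z ω = 1) (hW01 : ∀ ω, W ω = 0 ∨ W ω = 1) :
    μ {ω | Z ω * W ω = 1} = μ {ω | Z ω = 1} * μ {ω | W ω = 1} := by
  have hset : {ω | Z ω * W ω = 1} = Z ⁻¹' {1} ∩ W ⁻¹' {1} := by
    ext ω
    rcases hZ01 ω with h | h <;> rcases hW01 ω with h' | h' <;> simp [h, h']
  rw [hset, hZW.measure_inter_preimage_eq_mul _ _ (measurableSet_singleton 1)
    (measurableSet_singleton 1)]
  rfl

end ZeroOneValued

lemma ProbabilityTheory.iIndepFun.pairwise_indepFun_comp_sumElim {Ω ι β γ : Type*}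
    [MeasurableSpace Ω] {μ : Measure Ω} [MeasurableSpace β] [MeasurableSpace γ]
    {X Y : ι → Ω → β} (h : iIndepFun (Sum.elim X Y) μ) (hX : ∀ i, Measurable (X i))
    (hY : ∀ i, Measurable (Y i)) {φ : β → β → γ} (hφ : Measurable (Function.uncurry φ)) :
    Pairwise fun i j =>
      IndepFun (fun ω => φ (X i ω) (Y i ω)) (fun ω => φ (X j ω) (Y j ω)) μ := by
  intro i j hij
  have hXY : ∀ k, Measurable (Sum.elim X Y k) := Sum.rec hX hY
  exact (h.indepFun_prodMk_prodMk hXY (.inl i) (.inr i) (.inl j) (.inr j)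
    (by simpa using hij) (by simp) (by simp) (by simpa using hij)).comp hφ hφ

lemma tendsto_const_add_div_const_add {u v : ℕ → ℝ} {a b : ℝ} (c d : ℝ)
    (hu : Tendsto (fun n => u n / n) atTop (𝓝 a))
    (hv : Tendsto (fun n => v n / n) atTop (𝓝 b)) (hb : b ≠ 0) :
    Tendsto (fun n => (c + u n) / (d + v n)) atTop (𝓝 (a / b)) := by
  have hc := (tendsto_const_div_atTop_nhds_zero_nat c).add hu
  have hd := (tendsto_const_div_atTop_nhds_zero_nat d).add hv
  rw [zero_add] at hc hd
  refine (hc.div hd hb).congr' ?_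
  filter_upwards [eventually_ne_atTop 0] with n hn
  simp only [Pi.div_apply]
  rw [← add_div, ← add_div, div_div_div_cancel_right₀ (Nat.cast_ne_zero.2 hn)]

lemma tendsto_estimate_of_tendsto_frequencies {x y : ℕ → ℝ} {p q : ℝ} (γ c d : ℝ)
    (hp : p ≠ 1)
    (hx : Tendsto (fun n : ℕ => (∑ i ∈ range n, (1 - x i)) / n) atTop (𝓝 (1 - p)))
    (hxy : Tendsto (fun n : ℕ => (∑ i ∈ range n, (1 - x i) * y i) / n) atTop
      (𝓝 ((1 - p) * q))) :
    Tendsto (fun n : ℕ =>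
        (c + ∑ i ∈ range n, (1 - x i) * y i +
            γ * (d + ∑ i ∈ range n, (1 - x i) * (1 - y i))) /
          (c + d + ∑ i ∈ range n, (1 - x i)))
      atTop (𝓝 (q + γ * (1 - q))) := by
  have hnum : Tendsto (fun n : ℕ => (∑ i ∈ range n, (1 - x i) * y i +
      γ * ∑ i ∈ range n, (1 - x i) * (1 - y i)) / n) atTop
      (𝓝 ((1 - p) * q + γ * ((1 - p) - (1 - p) * q))) := by
    refine (hxy.add ((hx.sub hxy).const_mul γ)).congr fun n => ?_
    simp only [mul_one_sub, sum_sub_distrib]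
    ring
  have hp' : 1 - p ≠ 0 := sub_ne_zero.2 hp.symm
  convert tendsto_const_add_div_const_add (c + γ * d) (c + d) hnum hx hp' using 2
  · ring
  · field_simp

theorem stmt12_general {Ω : Type*} [MeasurableSpace Ω] (μ : Measure Ω) [IsProbabilityMeasure μ]
    (X Y : ℕ → Ω → ℝ) (p q : ℝ) (hp0 : 0 ≤ p) (hp1 : p < 1) (hq0 : 0 ≤ q)
    (hXmeas : ∀ n, Measurable (X n)) (hYmeas : ∀ n, Measurable (Y n))
    (hX01 : ∀ n ω, X n ω = 0 ∨ X n ω = 1) (hY01 : ∀ n ω, Y n ω = 0 ∨ Y n ω = 1)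
    (hXp : ∀ n, μ {ω | X n ω = 1} = ENNReal.ofReal p)
    (hYq : ∀ n, μ {ω | Y n ω = 1} = ENNReal.ofReal q)
    (hindep : iIndepFun (Sum.elim X Y) μ)
    (γ c d : ℝ) :
    ∀ᵐ ω ∂μ, Tendsto
      (fun n : ℕ =>
        (c + ∑ i ∈ Finset.range n, (1 - X i ω) * Y i ω +
            γ * (d + ∑ i ∈ Finset.range n, (1 - X i ω) * (1 - Y i ω))) /
          (c + d + ∑ i ∈ Finset.range n, (1 - X i ω)))
      atTop (nhds (q + γ * (1 - q))) := by
  have hL01 : ∀ i ω, 1 - X i ω = 0 ∨ 1 - X i ω = 1 := fun i ω => by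
    rcases hX01 i ω with h | h <;> simp [h]
  have hL : ∀ i, μ {ω | 1 - X i ω = 1} = 1 - ENNReal.ofReal p := fun i => by
    simpa [sub_eq_self, hXp] using prob_eq_zero_of_zero_or_one (μ := μ) (hXmeas i) (hX01 i)
  have hLH : ∀ i, μ {ω | (1 - X i ω) * Y i ω = 1} =
      (1 - ENNReal.ofReal p) * ENNReal.ofReal q := fun i => by
    have hXY : IndepFun (X i) (Y i) μ := hindep.indepFun (i := .inl i) (j := .inr i) (by simp)
    have hLY : IndepFun (fun ω => 1 - X i ω) (Y i) μ :=
      hXY.comp (measurable_const.sub measurable_id) measurable_id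
    rw [hLY.measure_mul_eq_one_of_zero_or_one (hL01 i) (hY01 i), hL, hYq]
  have hL_toReal : (1 - ENNReal.ofReal p).toReal = 1 - p := by
    rw [ENNReal.toReal_sub_of_le (ENNReal.ofReal_le_one.2 hp1.le) ENNReal.one_ne_top,
      ENNReal.toReal_one, ENNReal.toReal_ofReal hp0]
  have hslln_L := strong_law_ae_of_zero_or_one (Z := fun i ω => 1 - X i ω)
    (fun i => measurable_const.sub (hXmeas i)) hL01
    (hindep.pairwise_indepFun_comp_sumElim hXmeas hYmeas (φ := fun x _ => 1 - x)
      (by fun_prop)) hL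
  have hslln_LH := strong_law_ae_of_zero_or_one (Z := fun i ω => (1 - X i ω) * Y i ω)
    (fun i => (measurable_const.sub (hXmeas i)).mul (hYmeas i))
    (fun i ω => by rcases hL01 i ω with h | h <;> rcases hY01 i ω with h' | h' <;> simp [h, h'])
    (hindep.pairwise_indepFun_comp_sumElim hXmeas hYmeas (φ := fun x y => (1 - x) * y)
      (by fun_prop)) hLH
  rw [hL_toReal] at hslln_L
  rw [ENNReal.toReal_mul, hL_toReal, ENNReal.toReal_ofReal hq0] at hslln_LH
  filter_upwards [hslln_L, hslln_LH] with ω hLω hLHω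
  exact tendsto_estimate_of_tendsto_frequencies γ c d hp1.ne hLω hLHω

/-- Almost-sure limit of player 0's value estimate of L under epsilon-greedy
play in a fixed regime: if `(X_n)` and `(Y_n)` are mutually independent
sequences, with the `X_n` i.i.d. Bernoulli(`p`), `p ∈ [0,1)`, and the `Y_n`
i.i.d. Bernoulli(`q`), `q ∈ [0,1]`, then for `γ ∈ (0,1)`, almost surely
`(c + Σ_{i<n}(1−X_i)Y_i + γ·(d + Σ_{i<n}(1−X_i)(1−Y_i)))/(c + d + Σ_{i<n}(1−X_i))
→ q + γ·(1−q)` as `n → ∞`. -/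
theorem stmt12 {Ω : Type*} [MeasurableSpace Ω] (μ : Measure Ω) [IsProbabilityMeasure μ]
    (X Y : ℕ → Ω → ℝ) (p q : ℝ) (hp0 : 0 ≤ p) (hp1 : p < 1) (hq0 : 0 ≤ q) (hq1 : q ≤ 1)
    (hXmeas : ∀ n, Measurable (X n)) (hYmeas : ∀ n, Measurable (Y n))
    (hX01 : ∀ n ω, X n ω = 0 ∨ X n ω = 1) (hY01 : ∀ n ω, Y n ω = 0 ∨ Y n ω = 1)
    (hXp : ∀ n, μ {ω | X n ω = 1} = ENNReal.ofReal p)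
    (hYq : ∀ n, μ {ω | Y n ω = 1} = ENNReal.ofReal q)
    (hindep : iIndepFun (Sum.elim X Y) μ)
    (γ c d : ℝ) (hγ0 : 0 < γ) (hγ1 : γ < 1) (hc : 0 ≤ c) (hd : 0 ≤ d) :
    ∀ᵐ ω ∂μ, Tendsto
      (fun n : ℕ =>
        (c + ∑ i ∈ Finset.range n, (1 - X i ω) * Y i ω +
            γ * (d + ∑ i ∈ Finset.range n, (1 - X i ω) * (1 - Y i ω))) /
          (c + d + ∑ i ∈ Finset.range n, (1 - X i ω)))
      atTop (nhds (q + γ * (1 - q))) :=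
  stmt12_general μ X Y p q hp0 hp1 hq0 hXmeas hYmeas hX01 hY01 hXp hYq hindep γ c d
end

section
/- Fix real numbers β and γ with 1 > β > γ > 0 and parameters p, q ∈ (0,1). Let (X_n)_{n∈ℕ} and (Y_n)_{n∈ℕ} be mutually independent sequences of random variables with X_n i.i.d. Bernoulli(p) and Y_n i.i.d. Bernoulli(q), and fix nonnegative reals s0, s1, s2, s3. Define for each n the value estimates v_H(n) = β·(s0 + Σ_{i<n} X_i Y_i)/(s0 + s1 + Σ_{i<n} X_i) and v_L(n) = (s2 + Σ_{i<n} (1−X_i)·Y_i + γ·(s3 + Σ_{i<n} (1−X_i)(1−Y_i)))/(s2 + s3 + Σ_{i<n} (1−X_i)). Then almost surely there exists N such that for all n ≥ N, v_L(n) > v_H(n). (Hence in any fixed regime of target policies, the epsilon-greedy value estimates are eventually pushed away from those that induce the collusive target policy (H,H).) -/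
/-!
By the strong law of large numbers, almost surely the empirical frequencies of `X`, `Y` and
`X * Y` converge to `p`, `q` and `p * q`; the prior counts are swamped, so `v_H(n) → β q` and
`v_L(n) → q + γ (1 - q)`. Since `β < 1` and `γ ≥ 0`, the second limit is strictly larger, hence
`v_L(n) > v_H(n)` from some point on.
-/

open MeasureTheory ProbabilityTheory Filter Topology Finset

section ZeroOne

variable {Ω : Type*} [MeasurableSpace Ω] {μ : Measure Ω}

omit [MeasurableSpace Ω] in
theorem eq_indicator_of_zero_one {Z : Ω → ℝ} (h01 : ∀ ω, Z ω = 0 ∨ Z ω = 1) :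
    Z = {ω | Z ω = 1}.indicator 1 := by
  funext ω
  rcases h01 ω with h | h <;> simp [h]

theorem integral_of_zero_one {Z : Ω → ℝ} (hZ : Measurable Z) (h01 : ∀ ω, Z ω = 0 ∨ Z ω = 1) :
    ∫ ω, Z ω ∂μ = μ.real {ω | Z ω = 1} := by
  conv_lhs => rw [eq_indicator_of_zero_one h01]
  exact integral_indicator_one (hZ (measurableSet_singleton 1))

theorem integrable_of_zero_one [IsFiniteMeasure μ] {Z : Ω → ℝ} (hZ : Measurable Z)
    (h01 : ∀ ω, Z ω = 0 ∨ Z ω = 1) : Integrable Z μ := by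
  rw [eq_indicator_of_zero_one h01]
  exact (integrable_const 1).indicator (hZ (measurableSet_singleton 1))

theorem identDistrib_of_zero_one [IsFiniteMeasure μ] {Z W : Ω → ℝ}
    (hZ : Measurable Z) (hW : Measurable W)
    (hZ01 : ∀ ω, Z ω = 0 ∨ Z ω = 1) (hW01 : ∀ ω, W ω = 0 ∨ W ω = 1)
    (h : μ {ω | Z ω = 1} = μ {ω | W ω = 1}) : IdentDistrib Z W μ μ := by
  refine ⟨hZ.aemeasurable, hW.aemeasurable, Measure.ext fun s hs => ?_⟩
  rw [Measure.map_apply hZ hs, Measure.map_apply hW hs]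
  classical
  have preimage_eq : ∀ V : Ω → ℝ, (∀ ω, V ω = 0 ∨ V ω = 1) →
      V ⁻¹' s = if (1 : ℝ) ∈ s then (if (0 : ℝ) ∈ s then Set.univ else {ω | V ω = 1})
        else (if (0 : ℝ) ∈ s then {ω | V ω = 1}ᶜ else ∅) := by
    intro V h01
    ext ω
    rcases h01 ω with hv | hv <;> by_cases h1 : (1 : ℝ) ∈ s <;> by_cases h0 : (0 : ℝ) ∈ s <;>
      simp [hv, h1, h0]
  have hZm : MeasurableSet {ω | Z ω = 1} := hZ (measurableSet_singleton 1)
  have hWm : MeasurableSet {ω | W ω = 1} := hW (measurableSet_singleton 1)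
  rw [preimage_eq Z hZ01, preimage_eq W hW01]
  split_ifs <;> simp [measure_compl hZm (measure_ne_top μ _),
    measure_compl hWm (measure_ne_top μ _), h]

theorem ae_tendsto_sum_div_of_zero_one [IsFiniteMeasure μ] {Z : ℕ → Ω → ℝ} {r : ℝ} (hr : 0 ≤ r)
    (hZ : ∀ i, Measurable (Z i)) (h01 : ∀ i ω, Z i ω = 0 ∨ Z i ω = 1)
    (hind : Pairwise (Function.onFun (· ⟂ᵢ[μ] ·) Z))
    (hμ : ∀ i, μ {ω | Z i ω = 1} = ENNReal.ofReal r) :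
    ∀ᵐ ω ∂μ, Tendsto (fun n : ℕ => (∑ i ∈ range n, Z i ω) / n) atTop (𝓝 r) := by
  have hmean : μ[Z 0] = r := by
    rw [integral_of_zero_one (hZ 0) (h01 0), measureReal_def, hμ 0, ENNReal.toReal_ofReal hr]
  have hident (i : ℕ) : IdentDistrib (Z i) (Z 0) μ μ :=
    identDistrib_of_zero_one (hZ i) (hZ 0) (h01 i) (h01 0) (by rw [hμ i, hμ 0])
  simpa only [hmean] using
    strong_law_ae_real Z (integrable_of_zero_one (hZ 0) (h01 0)) hind hident

theorem ProbabilityTheory.IndepFun.measure_mul_eq_one {X Y : Ω → ℝ} (hXY : IndepFun X Y μ)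
    (hX01 : ∀ ω, X ω = 0 ∨ X ω = 1) (hY01 : ∀ ω, Y ω = 0 ∨ Y ω = 1) :
    μ {ω | X ω * Y ω = 1} = μ {ω | X ω = 1} * μ {ω | Y ω = 1} := by
  have hset : {ω | X ω * Y ω = 1} = X ⁻¹' {1} ∩ Y ⁻¹' {1} := by
    ext ω
    rcases hX01 ω with hx | hx <;> rcases hY01 ω with hy | hy <;> simp [hx, hy]
  rw [hset, hXY.measure_inter_preimage_eq_mul _ _ (measurableSet_singleton 1)
    (measurableSet_singleton 1)]
  rfl

theorem ProbabilityTheory.iIndepFun.pairwise_indepFun_mul_sumElim {ι : Type*}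
    {X Y : ι → Ω → ℝ} (hX : ∀ i, Measurable (X i)) (hY : ∀ i, Measurable (Y i))
    (h : iIndepFun (Sum.elim X Y) μ) :
    Pairwise (Function.onFun (· ⟂ᵢ[μ] ·) fun i ω => X i ω * Y i ω) := fun i j hij =>
  (h.indepFun_prodMk_prodMk (Sum.forall.2 ⟨hX, hY⟩) (.inl i) (.inr i) (.inl j) (.inr j)
    (by simpa using hij) (by simp) (by simp) (by simpa using hij)).comp
    (measurable_fst.mul measurable_snd) (measurable_fst.mul measurable_snd)

end ZeroOne

section Averages

variable {f g : ℕ → ℝ} {a b : ℝ}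

theorem tendsto_sum_one_div :
    Tendsto (fun n : ℕ => (∑ _i ∈ range n, (1 : ℝ)) / n) atTop (𝓝 1) := by
  refine tendsto_const_nhds.congr' ?_
  filter_upwards [eventually_ge_atTop 1] with n hn
  rw [sum_const, card_range, nsmul_one, div_self (by positivity)]

theorem Filter.Tendsto.sum_sub_div
    (hf : Tendsto (fun n : ℕ => (∑ i ∈ range n, f i) / n) atTop (𝓝 a))
    (hg : Tendsto (fun n : ℕ => (∑ i ∈ range n, g i) / n) atTop (𝓝 b)) :
    Tendsto (fun n : ℕ => (∑ i ∈ range n, (f i - g i)) / n) atTop (𝓝 (a - b)) := by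
  simpa only [sum_sub_distrib, sub_div] using hf.sub hg

theorem Filter.Tendsto.const_add_sum_div (c : ℝ)
    (hf : Tendsto (fun n : ℕ => (∑ i ∈ range n, f i) / n) atTop (𝓝 a)) :
    Tendsto (fun n : ℕ => (c + ∑ i ∈ range n, f i) / n) atTop (𝓝 a) := by
  simpa only [add_div, zero_add] using (tendsto_const_div_atTop_nhds_zero_nat c).add hf

theorem Filter.Tendsto.div_of_div_natCast {u v : ℕ → ℝ}
    (hu : Tendsto (fun n : ℕ => u n / n) atTop (𝓝 a))
    (hv : Tendsto (fun n : ℕ => v n / n) atTop (𝓝 b)) (hb : b ≠ 0) :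
    Tendsto (fun n => u n / v n) atTop (𝓝 (a / b)) := by
  refine (hu.div hv hb).congr' ?_
  filter_upwards [eventually_ge_atTop 1] with n hn
  exact div_div_div_cancel_right₀ (Nat.cast_ne_zero.2 (Nat.one_le_iff_ne_zero.1 hn)) _ _

end Averages

section ValueEstimates

noncomputable def valueH (β s0 s1 : ℝ) (x y : ℕ → ℝ) (n : ℕ) : ℝ :=
  β * (s0 + ∑ i ∈ range n, x i * y i) / (s0 + s1 + ∑ i ∈ range n, x i)

noncomputable def valueL (γ s2 s3 : ℝ) (x y : ℕ → ℝ) (n : ℕ) : ℝ :=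
  (s2 + ∑ i ∈ range n, (1 - x i) * y i + γ * (s3 + ∑ i ∈ range n, (1 - x i) * (1 - y i))) /
    (s2 + s3 + ∑ i ∈ range n, (1 - x i))

variable {x y : ℕ → ℝ} {p q : ℝ}

theorem tendsto_valueH (β s0 s1 : ℝ) (hp : p ≠ 0)
    (hx : Tendsto (fun n : ℕ => (∑ i ∈ range n, x i) / n) atTop (𝓝 p))
    (hxy : Tendsto (fun n : ℕ => (∑ i ∈ range n, x i * y i) / n) atTop (𝓝 (p * q))) :
    Tendsto (valueH β s0 s1 x y) atTop (𝓝 (β * q)) := by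
  unfold valueH
  have hnum : Tendsto (fun n : ℕ => β * (s0 + ∑ i ∈ range n, x i * y i) / n) atTop
      (𝓝 (β * (p * q))) := by
    simpa only [mul_div_assoc] using (hxy.const_add_sum_div s0).const_mul β
  convert hnum.div_of_div_natCast (hx.const_add_sum_div (s0 + s1)) hp using 2
  field_simp

theorem tendsto_valueL (γ s2 s3 : ℝ) (hp : p ≠ 1)
    (hx : Tendsto (fun n : ℕ => (∑ i ∈ range n, x i) / n) atTop (𝓝 p))
    (hy : Tendsto (fun n : ℕ => (∑ i ∈ range n, y i) / n) atTop (𝓝 q))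
    (hxy : Tendsto (fun n : ℕ => (∑ i ∈ range n, x i * y i) / n) atTop (𝓝 (p * q))) :
    Tendsto (valueL γ s2 s3 x y) atTop (𝓝 (q + γ * (1 - q))) := by
  unfold valueL
  have hp' : 1 - p ≠ 0 := sub_ne_zero.2 hp.symm
  have hLH : Tendsto (fun n : ℕ => (∑ i ∈ range n, (1 - x i) * y i) / n) atTop
      (𝓝 (q - p * q)) := by
    simpa only [sub_mul, one_mul] using hy.sum_sub_div hxy
  have hLL : Tendsto (fun n : ℕ => (∑ i ∈ range n, (1 - x i) * (1 - y i)) / n) atTop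
      (𝓝 ((1 - q) - (p - p * q))) := by
    have h (i : ℕ) : (1 - x i) * (1 - y i) = (1 - y i) - (x i - x i * y i) := by ring
    simpa only [h] using ((tendsto_sum_one_div).sum_sub_div hy).sum_sub_div (hx.sum_sub_div hxy)
  have hL : Tendsto (fun n : ℕ => (∑ i ∈ range n, (1 - x i)) / n) atTop (𝓝 (1 - p)) :=
    (tendsto_sum_one_div).sum_sub_div hx
  have hnum : Tendsto (fun n : ℕ => (s2 + ∑ i ∈ range n, (1 - x i) * y i +
      γ * (s3 + ∑ i ∈ range n, (1 - x i) * (1 - y i))) / n) atTop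
      (𝓝 ((q - p * q) + γ * ((1 - q) - (p - p * q)))) := by
    simpa only [add_div, mul_div_assoc] using
      (hLH.const_add_sum_div s2).add ((hLL.const_add_sum_div s3).const_mul γ)
  convert hnum.div_of_div_natCast (hL.const_add_sum_div (s2 + s3)) hp' using 2
  field_simp

theorem eventually_valueH_lt_valueL {β γ : ℝ} (hβ : β < 1) (hγ : 0 ≤ γ)
    (hp0 : p ≠ 0) (hp1 : p ≠ 1) (hq0 : 0 < q) (hq1 : q ≤ 1)
    (hx : Tendsto (fun n : ℕ => (∑ i ∈ range n, x i) / n) atTop (𝓝 p))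
    (hy : Tendsto (fun n : ℕ => (∑ i ∈ range n, y i) / n) atTop (𝓝 q))
    (hxy : Tendsto (fun n : ℕ => (∑ i ∈ range n, x i * y i) / n) atTop (𝓝 (p * q)))
    (s0 s1 s2 s3 : ℝ) :
    ∀ᶠ n in atTop, valueH β s0 s1 x y n < valueL γ s2 s3 x y n :=
  (tendsto_valueH β s0 s1 hp0 hx hxy).eventually_lt (tendsto_valueL γ s2 s3 hp1 hx hy hxy)
    (by nlinarith [mul_nonneg hγ (sub_nonneg.2 hq1)])

end ValueEstimates

theorem stmt13_general {Ω : Type*} [MeasurableSpace Ω] (μ : Measure Ω) [IsProbabilityMeasure μ]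
    (β γ : ℝ) (hβ1 : β < 1) (hγ0 : 0 < γ)
    (X Y : ℕ → Ω → ℝ) (p q : ℝ) (hp0 : 0 < p) (hp1 : p < 1) (hq0 : 0 < q) (hq1 : q < 1)
    (hXmeas : ∀ n, Measurable (X n)) (hYmeas : ∀ n, Measurable (Y n))
    (hX01 : ∀ n ω, X n ω = 0 ∨ X n ω = 1) (hY01 : ∀ n ω, Y n ω = 0 ∨ Y n ω = 1)
    (hXp : ∀ n, μ {ω | X n ω = 1} = ENNReal.ofReal p)
    (hYq : ∀ n, μ {ω | Y n ω = 1} = ENNReal.ofReal q)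
    (hindep : iIndepFun (Sum.elim X Y) μ)
    (s0 s1 s2 s3 : ℝ) :
    ∀ᵐ ω ∂μ, ∃ N : ℕ, ∀ n : ℕ, N ≤ n →
      (s2 + ∑ i ∈ Finset.range n, (1 - X i ω) * Y i ω +
          γ * (s3 + ∑ i ∈ Finset.range n, (1 - X i ω) * (1 - Y i ω))) /
        (s2 + s3 + ∑ i ∈ Finset.range n, (1 - X i ω)) >
      β * (s0 + ∑ i ∈ Finset.range n, X i ω * Y i ω) /
        (s0 + s1 + ∑ i ∈ Finset.range n, X i ω) := by
  have hXY_indep (i : ℕ) : X i ⟂ᵢ[μ] Y i :=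
    hindep.indepFun (i := .inl i) (j := .inr i) (by simp)
  have hX := ae_tendsto_sum_div_of_zero_one hp0.le hXmeas hX01
    (fun i j hij => hindep.indepFun (i := .inl i) (j := .inl j) (by simpa using hij)) hXp
  have hY := ae_tendsto_sum_div_of_zero_one hq0.le hYmeas hY01
    (fun i j hij => hindep.indepFun (i := .inr i) (j := .inr j) (by simpa using hij)) hYq
  have hXY := ae_tendsto_sum_div_of_zero_one (Z := fun i ω => X i ω * Y i ω)
    (mul_nonneg hp0.le hq0.le) (fun i => (hXmeas i).mul (hYmeas i))
    (fun i ω => by rcases hX01 i ω with h | h <;> simp [h, hY01 i ω])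
    (hindep.pairwise_indepFun_mul_sumElim hXmeas hYmeas)
    (fun i => by
      rw [(hXY_indep i).measure_mul_eq_one (hX01 i) (hY01 i),
        hXp, hYq, ENNReal.ofReal_mul hp0.le])
  filter_upwards [hX, hY, hXY] with ω hx hy hxy
  exact eventually_atTop.1 (eventually_valueH_lt_valueL hβ1 hγ0.le hp0.ne' hp1.ne hq0 hq1.le
    hx hy hxy s0 s1 s2 s3)

/-- Regime analysis in Proposition 3 of the paper: with `1 > β > γ > 0`,
`p, q ∈ (0,1)`, mutually independent sequences `(X_n)` i.i.d. Bernoulli(`p`)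
and `(Y_n)` i.i.d. Bernoulli(`q`), and nonnegative prior outcome counts
`s0, s1, s2, s3`, almost surely the value estimate of L eventually strictly
exceeds the value estimate of H: the epsilon-greedy value estimates are pushed
away from those inducing the collusive target policy. -/
theorem stmt13 {Ω : Type*} [MeasurableSpace Ω] (μ : Measure Ω) [IsProbabilityMeasure μ]
    (β γ : ℝ) (hβ1 : β < 1) (hγβ : γ < β) (hγ0 : 0 < γ)
    (X Y : ℕ → Ω → ℝ) (p q : ℝ) (hp0 : 0 < p) (hp1 : p < 1) (hq0 : 0 < q) (hq1 : q < 1)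
    (hXmeas : ∀ n, Measurable (X n)) (hYmeas : ∀ n, Measurable (Y n))
    (hX01 : ∀ n ω, X n ω = 0 ∨ X n ω = 1) (hY01 : ∀ n ω, Y n ω = 0 ∨ Y n ω = 1)
    (hXp : ∀ n, μ {ω | X n ω = 1} = ENNReal.ofReal p)
    (hYq : ∀ n, μ {ω | Y n ω = 1} = ENNReal.ofReal q)
    (hindep : iIndepFun (Sum.elim X Y) μ)
    (s0 s1 s2 s3 : ℝ) (hs0 : 0 ≤ s0) (hs1 : 0 ≤ s1) (hs2 : 0 ≤ s2) (hs3 : 0 ≤ s3) :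
    ∀ᵐ ω ∂μ, ∃ N : ℕ, ∀ n : ℕ, N ≤ n →
      (s2 + ∑ i ∈ Finset.range n, (1 - X i ω) * Y i ω +
          γ * (s3 + ∑ i ∈ Finset.range n, (1 - X i ω) * (1 - Y i ω))) /
        (s2 + s3 + ∑ i ∈ Finset.range n, (1 - X i ω)) >
      β * (s0 + ∑ i ∈ Finset.range n, X i ω * Y i ω) /
        (s0 + s1 + ∑ i ∈ Finset.range n, X i ω) :=
  stmt13_general μ β γ hβ1 hγ0 X Y p q hp0 hp1 hq0 hq1 hXmeas hYmeas hX01 hY01 hXp hYq hindep s0 s1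
    s2 s3
end

section
/- Fix real numbers β and γ with 1 > β > γ > 0 and ε_0, ε_1 ∈ (0,1). Consider the stochastic process in which two players repeatedly play the Prisoner's Dilemma, each player i using the epsilon-greedy bandit algorithm with parameter ε_i: at each round, independently of everything else, with probability 1 − ε_i player i plays the action with the strictly maximal empirical-mean value estimate from its own history (with unplayed actions valued 0, and ties broken by a fixed rule), and with probability ε_i plays an action uniformly at random; the round's rewards are the Prisoner's Dilemma payoffs of the joint action and each player updates its own history. Then almost surely the players never learn to collude: with probability 1, there is no time T such that for all t ≥ T both players' value estimates satisfy v_i(H, t) > v_i(L, t); equivalently, almost surely, for every T there exists t ≥ T at which some player's value estimate of H does not exceed its value estimate of L. -/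
/-!
Suppose that from some time `T` on both target policies are `H`. Then each player's action is a
fixed function of its own exploration seed (it plays `L` exactly when it explores towards `L`), so
the rounds after `T` are i.i.d. By the strong law of large numbers, player 1's value estimate of
an action `x` converges to the expected payoff of `x` against player 0's resulting mixed action.
Since `L` strictly dominates `H` in the Prisoner's Dilemma, the limit for `L` is the larger one,
so eventually player 1 values `L` above `H`, a contradiction.
-/

open MeasureTheory ProbabilityTheory Filter

open Function
open scoped Topology

lemma cnt_append (x b : Act) (r : ℝ) (l : List (Act × ℝ)) :
    cnt x (l ++ [(b, r)]) = cnt x l + if b = x then 1 else 0 := by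
  by_cases hb : b = x <;> simp [cnt, List.filter_append, hb]

lemma tot_append (x b : Act) (r : ℝ) (l : List (Act × ℝ)) :
    tot x (l ++ [(b, r)]) = tot x l + if b = x then r else 0 := by
  by_cases hb : b = x <;> simp [tot, List.filter_append, hb]

-- `x / 0 = 0` makes the quotient agree with `val` also on unplayed actions.
lemma val_eq_tot_div_cnt (x : Act) (l : List (Act × ℝ)) : val x l = tot x l / cnt x l := by
  unfold val
  split_ifs with h <;> simp [h]

section History

variable {hs : ℕ → List (Act × ℝ)} {b : ℕ → Act} {r : ℕ → ℝ}

lemma cnt_eq_sum (h0 : hs 0 = []) (hsucc : ∀ t, hs (t + 1) = hs t ++ [(b t, r t)])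
    (x : Act) (n : ℕ) :
    (cnt x (hs n) : ℝ) = ∑ t ∈ Finset.range n, if b t = x then 1 else 0 := by
  induction n with
  | zero => simp [h0, cnt]
  | succ n ih => rw [hsucc, cnt_append, Finset.sum_range_succ, ← ih]; split_ifs <;> simp

lemma tot_eq_sum (h0 : hs 0 = []) (hsucc : ∀ t, hs (t + 1) = hs t ++ [(b t, r t)])
    (x : Act) (n : ℕ) :
    tot x (hs n) = ∑ t ∈ Finset.range n, if b t = x then r t else 0 := by
  induction n with
  | zero => simp [h0, tot]
  | succ n ih => rw [hsucc, tot_append, Finset.sum_range_succ, ← ih]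

lemma tendsto_val_of_tendsto_averages (h0 : hs 0 = [])
    (hsucc : ∀ t, hs (t + 1) = hs t ++ [(b t, r t)]) {x : Act} {p m : ℝ} (hp : p ≠ 0)
    (hcnt : Tendsto (fun n : ℕ => (∑ t ∈ Finset.range n, if b t = x then (1 : ℝ) else 0) / n) atTop
      (𝓝 p))
    (htot : Tendsto (fun n : ℕ => (∑ t ∈ Finset.range n, if b t = x then r t else 0) / n) atTop
      (𝓝 (m * p))) :
    Tendsto (fun n => val x (hs n)) atTop (𝓝 m) := by
  rw [← mul_div_cancel_right₀ m hp]
  refine (htot.div hcnt hp).congr' ?_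
  filter_upwards [eventually_ne_atTop 0] with n hn
  rw [val_eq_tot_div_cnt, cnt_eq_sum h0 hsucc, tot_eq_sum h0 hsucc, Pi.div_apply,
    div_div_div_cancel_right₀ (Nat.cast_ne_zero.mpr hn)]

end History

lemma tendsto_average_congr {f g : ℕ → ℝ} {ℓ : ℝ} (hfg : f =ᶠ[atTop] g)
    (hg : Tendsto (fun n : ℕ => (∑ t ∈ Finset.range n, g t) / n) atTop (𝓝 ℓ)) :
    Tendsto (fun n : ℕ => (∑ t ∈ Finset.range n, f t) / n) atTop (𝓝 ℓ) := by
  obtain ⟨T, hT⟩ := eventually_atTop.mp hfg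
  set c := ∑ t ∈ Finset.range T, (f t - g t)
  have hsum : ∀ n ≥ T, ∑ t ∈ Finset.range n, f t = c + ∑ t ∈ Finset.range n, g t := by
    intro n hn
    rw [← sub_eq_iff_eq_add, ← Finset.sum_sub_distrib, ← Finset.sum_range_add_sum_Ico _ hn,
      Finset.sum_eq_zero fun t ht => sub_eq_zero.mpr (hT t (Finset.mem_Ico.mp ht).1), add_zero]
  simpa using ((tendsto_const_div_atTop_nhds_zero_nat c).add hg).congr' <|
    (eventually_ge_atTop T).mono fun n hn => by rw [hsum n hn, add_div]

section StrongLaw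

variable {Ω E : Type*} [MeasurableSpace Ω] [MeasurableSpace E] {μ : Measure Ω}

lemma ae_tendsto_average_comp {Z : ℕ → Ω → E} (hZ : ∀ t, Measurable (Z t))
    (hindep : Pairwise ((IndepFun · · μ) on Z)) {ρ : Measure E} (hlaw : ∀ t, μ.map (Z t) = ρ)
    {φ : E → ℝ} (hφ : Measurable φ) (hint : Integrable φ ρ) :
    ∀ᵐ ω ∂μ, Tendsto (fun n : ℕ => (∑ t ∈ Finset.range n, φ (Z t ω)) / n) atTop
      (𝓝 (∫ z, φ z ∂ρ)) := by
  have hmean : ∫ ω, φ (Z 0 ω) ∂μ = ∫ z, φ z ∂ρ := by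
    rw [← hlaw 0, integral_map (hZ 0).aemeasurable hφ.aestronglyMeasurable]
  rw [← hmean]
  refine strong_law_ae_real (fun t ω => φ (Z t ω)) ?_ (fun s t hst => (hindep hst).comp hφ hφ)
    fun t => IdentDistrib.comp ⟨(hZ t).aemeasurable, (hZ 0).aemeasurable, by rw [hlaw, hlaw]⟩ hφ
  rw [← hlaw 0] at hint
  exact (integrable_map_measure hφ.aestronglyMeasurable (hZ 0).aemeasurable).mp hint

lemma ae_tendsto_average_comp_prodMk [IsFiniteMeasure μ] {ι : Type*} {U : ι → ℕ → Ω → ℝ}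
    (hUmeas : ∀ i t, Measurable (U i t)) (hUindep : iIndepFun (fun p : ι × ℕ => U p.1 p.2) μ)
    {ρ : Measure ℝ} (hlaw : ∀ i t, μ.map (U i t) = ρ) {i j : ι} (hij : i ≠ j)
    {φ : ℝ × ℝ → ℝ} (hφ : Measurable φ) (hint : Integrable φ (ρ.prod ρ)) :
    ∀ᵐ ω ∂μ, Tendsto (fun n : ℕ => (∑ t ∈ Finset.range n, φ (U i t ω, U j t ω)) / n) atTop
      (𝓝 (∫ z, φ z ∂(ρ.prod ρ))) := by
  refine ae_tendsto_average_comp (Z := fun t ω => (U i t ω, U j t ω))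
    (fun t => (hUmeas i t).prodMk (hUmeas j t)) (fun s t hst => ?_) (fun t => ?_) hφ hint
  · exact hUindep.indepFun_prodMk_prodMk (fun p => hUmeas p.1 p.2) (i, s) (j, s) (i, t) (j, t)
      (by simp [hst]) (by simp [hst]) (by simp [hst]) (by simp [hst])
  · have hind : IndepFun (U i t) (U j t) μ :=
      hUindep.indepFun (i := (i, t)) (j := (j, t)) (by simp [hij])
    rw [(indepFun_iff_map_prod_eq_prod_map_map (hUmeas i t).aemeasurable
      (hUmeas j t).aemeasurable).mp hind, hlaw, hlaw]

end StrongLaw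

lemma pay_H_lt_pay_L {β γ : ℝ} (hβ1 : β < 1) (hγ0 : 0 < γ) (y : Act) :
    pay β γ .H y < pay β γ .L y := by
  cases y <;> simp only [pay] <;> linarith

-- The action of a player with parameter `e` and seed `u` while its target policy is `H`.
noncomputable def actUnderTargetH (e u : ℝ) : Act := if u ∈ Set.Ico (e / 2) e then .L else .H

lemma ite_eq_actUnderTargetH {e u vH vL : ℝ} (hv : vH > vL) (z : Act) :
    (if u < e then (if u < e / 2 then Act.H else Act.L) else if vH > vL then Act.H else z) =
      actUnderTargetH e u := by
  unfold actUnderTargetH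
  by_cases h1 : u < e <;> by_cases h2 : u < e / 2 <;> simp [h1, h2, hv]

section UniformSeed

variable (e : ℝ) (f : Act → ℝ)

lemma comp_actUnderTargetH_eq :
    (fun u => f (actUnderTargetH e u)) =
      fun u => (Set.Ico (e / 2) e).indicator (fun _ => f .L - f .H) u + f .H := by
  ext u
  by_cases hu : u ∈ Set.Ico (e / 2) e <;> simp [actUnderTargetH, hu]

lemma measurable_comp_actUnderTargetH : Measurable fun u => f (actUnderTargetH e u) := by
  rw [comp_actUnderTargetH_eq]
  exact (measurable_const.indicator measurableSet_Ico).add measurable_const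

lemma integrable_comp_actUnderTargetH (ν : Measure ℝ) [IsFiniteMeasure ν] :
    Integrable (fun u => f (actUnderTargetH e u)) ν := by
  rw [comp_actUnderTargetH_eq]
  exact ((integrable_const _).indicator measurableSet_Ico).add (integrable_const _)

variable {e}

lemma integral_comp_actUnderTargetH (he0 : 0 ≤ e) (he1 : e ≤ 1) :
    ∫ u, f (actUnderTargetH e u) ∂(volume.restrict (Set.Icc (0 : ℝ) 1)) =
      e / 2 * f .L + (1 - e / 2) * f .H := by
  have hsub : Set.Ico (e / 2) e ⊆ Set.Icc 0 1 := fun u hu =>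
    ⟨by linarith [hu.1], by linarith [hu.2]⟩
  rw [comp_actUnderTargetH_eq, integral_add ((integrable_const _).indicator measurableSet_Ico)
    (integrable_const _), integral_indicator_const _ measurableSet_Ico, integral_const,
    measureReal_restrict_apply measurableSet_Ico, Set.inter_eq_self_of_subset_left hsub,
    measureReal_restrict_apply MeasurableSet.univ, Set.univ_inter, Real.volume_real_Ico_of_le
    (by linarith), Real.volume_real_Icc_of_le zero_le_one]
  simp only [smul_eq_mul]
  ring

lemma integral_ite_actUnderTargetH_ne_zero (he0 : 0 < e) (he1 : e ≤ 1) (x : Act) :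
    ∫ u, (if actUnderTargetH e u = x then (1 : ℝ) else 0)
      ∂(volume.restrict (Set.Icc (0 : ℝ) 1)) ≠ 0 := by
  rw [integral_comp_actUnderTargetH (fun y => if y = x then (1 : ℝ) else 0) he0.le he1]
  cases x <;> simp <;> linarith

lemma integral_pay_H_lt_integral_pay_L {β γ : ℝ} (hβ1 : β < 1) (hγ0 : 0 < γ) (he0 : 0 ≤ e)
    (he1 : e ≤ 1) :
    ∫ u, pay β γ .H (actUnderTargetH e u) ∂(volume.restrict (Set.Icc (0 : ℝ) 1)) <
      ∫ u, pay β γ .L (actUnderTargetH e u) ∂(volume.restrict (Set.Icc (0 : ℝ) 1)) := by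
  rw [integral_comp_actUnderTargetH _ he0 he1, integral_comp_actUnderTargetH _ he0 he1]
  nlinarith [pay_H_lt_pay_L hβ1 hγ0 .H, pay_H_lt_pay_L hβ1 hγ0 .L]

end UniformSeed

lemma tendsto_val_of_eventually_actUnderTargetH {β γ e₀ e₁ : ℝ} {hs : ℕ → List (Act × ℝ)}
    {b₀ b₁ : ℕ → Act} {u₀ u₁ : ℕ → ℝ} (h0 : hs 0 = [])
    (hsucc : ∀ t, hs (t + 1) = hs t ++ [(b₁ t, pay β γ (b₁ t) (b₀ t))])
    (hb : ∀ᶠ t in atTop, b₀ t = actUnderTargetH e₀ (u₀ t) ∧ b₁ t = actUnderTargetH e₁ (u₁ t))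
    {x : Act} {p m : ℝ} (hp : p ≠ 0)
    (hcnt : Tendsto (fun n : ℕ =>
      (∑ t ∈ Finset.range n, if actUnderTargetH e₁ (u₁ t) = x then (1 : ℝ) else 0) / n) atTop
      (𝓝 p))
    (htot : Tendsto (fun n : ℕ => (∑ t ∈ Finset.range n, pay β γ x (actUnderTargetH e₀ (u₀ t)) *
      if actUnderTargetH e₁ (u₁ t) = x then (1 : ℝ) else 0) / n) atTop (𝓝 (m * p))) :
    Tendsto (fun n => val x (hs n)) atTop (𝓝 m) := by
  refine tendsto_val_of_tendsto_averages h0 hsucc hp (tendsto_average_congr ?_ hcnt)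
    (tendsto_average_congr ?_ htot) <;> filter_upwards [hb] with t ⟨hb₀, hb₁⟩
  · rw [hb₁]
  · rw [hb₀, hb₁]
    split_ifs with hx <;> simp [hx]

lemma ae_tendsto_averages_actUnderTargetH {Ω ι : Type*} [MeasurableSpace Ω] {μ : Measure Ω}
    [IsProbabilityMeasure μ] {U : ι → ℕ → Ω → ℝ} (hUmeas : ∀ i t, Measurable (U i t))
    (hUindep : iIndepFun (fun p : ι × ℕ => U p.1 p.2) μ) {ρ : Measure ℝ}
    (hlaw : ∀ i t, μ.map (U i t) = ρ) {i j : ι} (hij : i ≠ j) (β γ e₀ e₁ : ℝ) (x : Act) :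
    ∀ᵐ ω ∂μ,
      Tendsto (fun n : ℕ => (∑ t ∈ Finset.range n,
        if actUnderTargetH e₁ (U j t ω) = x then (1 : ℝ) else 0) / n) atTop
        (𝓝 (∫ u, (if actUnderTargetH e₁ u = x then (1 : ℝ) else 0) ∂ρ)) ∧
      Tendsto (fun n : ℕ => (∑ t ∈ Finset.range n, pay β γ x (actUnderTargetH e₀ (U i t ω)) *
        if actUnderTargetH e₁ (U j t ω) = x then (1 : ℝ) else 0) / n) atTop
        (𝓝 ((∫ u, pay β γ x (actUnderTargetH e₀ u) ∂ρ) *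
          ∫ u, (if actUnderTargetH e₁ u = x then (1 : ℝ) else 0) ∂ρ)) := by
  have : IsProbabilityMeasure ρ :=
    hlaw i 0 ▸ Measure.isProbabilityMeasure_map (hUmeas i 0).aemeasurable
  have hind_meas := measurable_comp_actUnderTargetH e₁ fun y => if y = x then (1 : ℝ) else 0
  have hind := integrable_comp_actUnderTargetH e₁ (fun y => if y = x then (1 : ℝ) else 0) ρ
  have hcnt := ae_tendsto_average_comp_prodMk hUmeas hUindep hlaw hij
    (φ := fun z => if actUnderTargetH e₁ z.2 = x then 1 else 0)
    (hind_meas.comp measurable_snd) (hind.comp_snd ρ)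
  have htot := ae_tendsto_average_comp_prodMk hUmeas hUindep hlaw hij
    (φ := fun z => pay β γ x (actUnderTargetH e₀ z.1) *
      if actUnderTargetH e₁ z.2 = x then 1 else 0)
    (((measurable_comp_actUnderTargetH e₀ (pay β γ x)).comp measurable_fst).mul
      (hind_meas.comp measurable_snd))
    ((integrable_comp_actUnderTargetH e₀ (pay β γ x) ρ).mul_prod hind)
  rw [integral_fun_snd (fun u => if actUnderTargetH e₁ u = x then (1 : ℝ) else 0), probReal_univ,
    one_smul] at hcnt
  rw [integral_prod_mul (fun u => pay β γ x (actUnderTargetH e₀ u))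
    (fun u => if actUnderTargetH e₁ u = x then (1 : ℝ) else 0)] at htot
  exact hcnt.and htot

theorem stmt14_general {Ω : Type*} [MeasurableSpace Ω] (μ : Measure Ω) [IsProbabilityMeasure μ]
    (β γ : ℝ) (hβ1 : β < 1) (hγ0 : 0 < γ)
    (ε : Fin 2 → ℝ) (hε0 : ∀ i, 0 < ε i) (hε1 : ∀ i, ε i < 1)
    (U : Fin 2 → ℕ → Ω → ℝ)
    (hUmeas : ∀ i t, Measurable (U i t))
    (hUunif : ∀ i t, Measure.map (U i t) μ = volume.restrict (Set.Icc (0 : ℝ) 1))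
    (hUindep : iIndepFun
      (fun p : Fin 2 × ℕ => U p.1 p.2) μ)
    (tie : Fin 2 → List (Act × ℝ) → Act)
    (a : Fin 2 → ℕ → Ω → Act) (h : Fin 2 → ℕ → Ω → List (Act × ℝ))
    (hinit : ∀ (i : Fin 2) (ω : Ω), h i 0 ω = [])
    (hrec : ∀ (i : Fin 2) (t : ℕ) (ω : Ω),
      h i (t + 1) ω = h i t ω ++ [(a i t ω, pay β γ (a i t ω) (a (1 - i) t ω))])
    (haction : ∀ (i : Fin 2) (t : ℕ) (ω : Ω),
      a i t ω =
        if U i t ω < ε i then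
          (if U i t ω < ε i / 2 then Act.H else Act.L)
        else if val Act.H (h i t ω) > val Act.L (h i t ω) then Act.H
        else if val Act.L (h i t ω) > val Act.H (h i t ω) then Act.L
        else tie i (h i t ω)) :
    ∀ᵐ ω ∂μ, ∀ T : ℕ, ∃ t : ℕ, T ≤ t ∧ ∃ i : Fin 2,
      ¬ val Act.H (h i t ω) > val Act.L (h i t ω) := by
  have hlim (x : Act) := ae_tendsto_averages_actUnderTargetH hUmeas hUindep hUunif
    (zero_ne_one (α := Fin 2)) β γ (ε 0) (ε 1) x
  filter_upwards [hlim .H, hlim .L] with ω hH hL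
  intro T
  by_contra! hcon
  have hplay : ∀ᶠ t in atTop,
      a 0 t ω = actUnderTargetH (ε 0) (U 0 t ω) ∧ a 1 t ω = actUnderTargetH (ε 1) (U 1 t ω) :=
    (eventually_ge_atTop T).mono fun t ht =>
      ⟨(haction 0 t ω).trans (ite_eq_actUnderTargetH (hcon t ht 0) _),
        (haction 1 t ω).trans (ite_eq_actUnderTargetH (hcon t ht 1) _)⟩
  have hvalH := tendsto_val_of_eventually_actUnderTargetH (hs := (h 1 · ω)) (hinit 1 ω)
    (hrec 1 · ω) hplay (integral_ite_actUnderTargetH_ne_zero (hε0 1) (hε1 1).le .H) hH.1 hH.2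
  have hvalL := tendsto_val_of_eventually_actUnderTargetH (hs := (h 1 · ω)) (hinit 1 ω)
    (hrec 1 · ω) hplay (integral_ite_actUnderTargetH_ne_zero (hε0 1) (hε1 1).le .L) hL.1 hL.2
  obtain ⟨n, hn, hTn⟩ := ((hvalH.eventually_lt hvalL
    (integral_pay_H_lt_integral_pay_L hβ1 hγ0 (hε0 0).le (hε1 0).le)).and
    (eventually_ge_atTop T)).exists
  exact (hcon n hTn 1).asymm hn

/-- Proposition 3 of the paper: two epsilon-greedy bandits with parameters
`ε_0, ε_1 ∈ (0,1)` playing the repeated Prisoner's Dilemma almost surely never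
learn to collude. The exploration randomness is modeled by mutually
independent random seeds `U i t`, uniform on `[0,1]`: with probability
`ε i` (when `U i t < ε i`) player `i` plays an action uniformly at random
(H when `U i t < ε i / 2`, L otherwise), and with probability `1 − ε i` it
plays the action with the strictly maximal value estimate (ties broken by the
fixed rule `tie`). Almost surely, for every time `T` there is a time `t ≥ T`
at which some player's value estimate of H does not exceed its value estimate
of L. -/
theorem stmt14 {Ω : Type*} [MeasurableSpace Ω] (μ : Measure Ω) [IsProbabilityMeasure μ]
    (β γ : ℝ) (hβ1 : β < 1) (hγβ : γ < β) (hγ0 : 0 < γ)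
    (ε : Fin 2 → ℝ) (hε0 : ∀ i, 0 < ε i) (hε1 : ∀ i, ε i < 1)
    (U : Fin 2 → ℕ → Ω → ℝ)
    (hUmeas : ∀ i t, Measurable (U i t))
    (hUunif : ∀ i t, Measure.map (U i t) μ = volume.restrict (Set.Icc (0 : ℝ) 1))
    (hUindep : iIndepFun
      (fun p : Fin 2 × ℕ => U p.1 p.2) μ)
    (tie : Fin 2 → List (Act × ℝ) → Act)
    (a : Fin 2 → ℕ → Ω → Act) (h : Fin 2 → ℕ → Ω → List (Act × ℝ))
    (hinit : ∀ (i : Fin 2) (ω : Ω), h i 0 ω = [])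
    (hrec : ∀ (i : Fin 2) (t : ℕ) (ω : Ω),
      h i (t + 1) ω = h i t ω ++ [(a i t ω, pay β γ (a i t ω) (a (1 - i) t ω))])
    (haction : ∀ (i : Fin 2) (t : ℕ) (ω : Ω),
      a i t ω =
        if U i t ω < ε i then
          (if U i t ω < ε i / 2 then Act.H else Act.L)
        else if val Act.H (h i t ω) > val Act.L (h i t ω) then Act.H
        else if val Act.L (h i t ω) > val Act.H (h i t ω) then Act.L
        else tie i (h i t ω)) :
    ∀ᵐ ω ∂μ, ∀ T : ℕ, ∃ t : ℕ, T ≤ t ∧ ∃ i : Fin 2,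
      ¬ val Act.H (h i t ω) > val Act.L (h i t ω) :=
  stmt14_general μ β γ hβ1 hγ0 ε hε0 hε1 U hUmeas hUunif hUindep tie a h hinit hrec haction
end
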